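/- Let q > r be natural numbers, b ∈ ℕ, and a, p, s ∈ ℤ² with gcd(q, b·p + a) = 1, where gcd(q, v) for v = (v₁, v₂) ∈ ℤ² means gcd(q, v₁, v₂). Then the vectors (b·p + a)/q and (b·s + a)/r in ℝ² are distinct, and |(b·p + a)/q − (b·s + a)/r| ≥ 1/(b·lcm(q, r)) = gcd(q, r)/(b·q·r), where |·| denotes the maximum norm on ℝ² (here the left side is additionally multiplied by 1/b in the paper's formulation: |(1/b)·((b·p + a)/q − (b·s + a)/r)| ≥ gcd(q,r)/(b·q·r)). -/

import Mathlib

/-! Both vectors have coordinates in `(1/lcm(q, r)) ℤ`, so distinct ones are at least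
`1/lcm(q, r)` apart in the max norm. They are distinct because `(b·p + a)/q = w/r` would give
`q ∣ r·(b·p + a)` coordinatewise, hence `q ∣ r` by primitivity, which `r < q` forbids. -/

open Real

/-- `gcd(q, v₁, v₂)` for `q ∈ ℕ` and `v ∈ ℤ²`. -/
def gcdVec (q : ℕ) (v : Fin 2 → ℤ) : ℕ := Nat.gcd q (Int.gcd (v 0) (v 1))

theorem one_div_lcm_eq_gcd_div_mul (q r : ℕ) :
    1 / (Nat.lcm q r : ℝ) = Nat.gcd q r / ((q : ℝ) * r) := by
  rcases Nat.eq_zero_or_pos (Nat.gcd q r) with hd | hd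
  · obtain ⟨rfl, rfl⟩ := Nat.gcd_eq_zero_iff.mp hd
    simp
  · have hdL : (Nat.gcd q r : ℝ) * Nat.lcm q r = q * r := by exact_mod_cast Nat.gcd_mul_lcm q r
    rw [← hdL, div_mul_cancel_left₀ (by positivity), one_div]

theorem one_div_lcm_le_abs_div_sub_div {m n : ℤ} {q r : ℕ} (hq : 0 < q) (hr : 0 < r)
    (h : (m : ℝ) / q ≠ n / r) : 1 / (Nat.lcm q r : ℝ) ≤ |(m : ℝ) / q - n / r| := by
  set L := Nat.lcm q r
  have hL : (0 : ℝ) < L := by exact_mod_cast Nat.lcm_pos hq hr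
  obtain ⟨q', hq'⟩ := Nat.dvd_lcm_left q r
  obtain ⟨r', hr'⟩ := Nat.dvd_lcm_right q r
  set k : ℤ := m * q' - n * r'
  have hk : (m : ℝ) / q - n / r = k / L := by
    have hmq : (m : ℝ) / q = m * q' / L := by
      rw [div_eq_div_iff (by positivity) hL.ne']
      push_cast [L, hq']
      ring
    have hnr : (n : ℝ) / r = n * r' / L := by
      rw [div_eq_div_iff (by positivity) hL.ne']
      push_cast [L, hr']
      ring
    rw [hmq, hnr, ← sub_div]
    push_cast [k]
    rfl
  have hk0 : k ≠ 0 := by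
    intro hk0
    rw [hk0, Int.cast_zero, zero_div, sub_eq_zero] at hk
    exact h hk
  rw [hk, abs_div, abs_of_pos hL]
  gcongr
  exact_mod_cast Int.one_le_abs hk0

theorem one_div_lcm_le_norm_sub {ι : Type*} [Fintype ι] {u w : ι → ℤ} {q r : ℕ}
    (hq : 0 < q) (hr : 0 < r)
    (h : (fun i => (u i : ℝ) / q) ≠ fun i => (w i : ℝ) / r) :
    1 / (Nat.lcm q r : ℝ) ≤ ‖(fun i => (u i : ℝ) / q) - fun i => (w i : ℝ) / r‖ := by
  obtain ⟨i, hi⟩ := Function.ne_iff.mp h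
  calc 1 / (Nat.lcm q r : ℝ) ≤ |(u i : ℝ) / q - w i / r| :=
        one_div_lcm_le_abs_div_sub_div hq hr hi
    _ ≤ _ := norm_le_pi_norm ((fun i => (u i : ℝ) / q) - fun i => (w i : ℝ) / r) i

theorem dvd_of_gcdVec_eq_one {q : ℕ} {u : Fin 2 → ℤ} (hu : gcdVec q u = 1) {c : ℤ}
    (h : ∀ i, (q : ℤ) ∣ c * u i) : (q : ℤ) ∣ c := by
  have hgcd : (q : ℤ) ∣ c.natAbs * Int.gcd (u 0) (u 1) := by
    rw [← Int.natCast_mul, ← Int.gcd_mul_left]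
    exact Int.dvd_coe_gcd (h 0) (h 1)
  exact Int.natCast_dvd.mpr (Nat.Coprime.dvd_of_dvd_mul_right hu (Int.natCast_dvd_natCast.mp hgcd))

theorem div_ne_div_of_gcdVec_eq_one {q r : ℕ} {u : Fin 2 → ℤ} (hu : gcdVec q u = 1)
    (hr : 0 < r) (hrq : r < q) (w : Fin 2 → ℤ) :
    (fun i => (u i : ℝ) / q) ≠ fun i => (w i : ℝ) / r := by
  intro h
  have hq : 0 < q := hr.trans hrq
  have hdvd : ∀ i, (q : ℤ) ∣ r * u i := fun i => by
    have hi := congrFun h i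
    rw [div_eq_div_iff (by positivity) (by positivity)] at hi
    exact Dvd.intro_left (w i) (by rw [mul_comm (r : ℤ)]; exact_mod_cast hi.symm)
  have := Int.le_of_dvd (by exact_mod_cast hr) (dvd_of_gcdVec_eq_one hu hdvd)
  omega

/-- If `q > r ≥ 1`, `b ≥ 1` and `gcd(q, b·p + a) = 1`, then the rational vectors
`(b·p + a)/q` and `(b·s + a)/r` are distinct, their max-norm distance is at least
`1/(b·lcm(q,r)) = gcd(q,r)/(b·q·r)`, and the `1/b`-scaled distance is at least
`gcd(q,r)/(b·q·r)`. -/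
theorem separation_of_rationals (q r b : ℕ) (hr : 1 ≤ r) (hqr : r < q) (hb : 1 ≤ b)
    (a p s : Fin 2 → ℤ)
    (hgcd : gcdVec q (fun i => (b : ℤ) * p i + a i) = 1) :
    (fun i => (((b : ℤ) * p i + a i : ℤ) : ℝ) / (q : ℝ)) ≠
      (fun i => (((b : ℤ) * s i + a i : ℤ) : ℝ) / (r : ℝ)) ∧
    1 / ((b : ℝ) * (Nat.lcm q r : ℝ)) ≤
      ‖(fun i => (((b : ℤ) * p i + a i : ℤ) : ℝ) / (q : ℝ)) -
        (fun i => (((b : ℤ) * s i + a i : ℤ) : ℝ) / (r : ℝ))‖ ∧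
    1 / ((b : ℝ) * (Nat.lcm q r : ℝ)) = (Nat.gcd q r : ℝ) / ((b : ℝ) * q * r) ∧
    (Nat.gcd q r : ℝ) / ((b : ℝ) * q * r) ≤
      ‖((b : ℝ))⁻¹ • ((fun i => (((b : ℤ) * p i + a i : ℤ) : ℝ) / (q : ℝ)) -
        (fun i => (((b : ℤ) * s i + a i : ℤ) : ℝ) / (r : ℝ)))‖ := by
  have hne := div_ne_div_of_gcdVec_eq_one hgcd hr hqr fun i => (b : ℤ) * s i + a i
  have hsep := one_div_lcm_le_norm_sub (by omega) hr hne
  have hscale : 1 / ((b : ℝ) * Nat.lcm q r) = (b : ℝ)⁻¹ * (1 / Nat.lcm q r) := by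
    simp only [one_div, mul_inv]
  have heq : 1 / ((b : ℝ) * Nat.lcm q r) = Nat.gcd q r / ((b : ℝ) * q * r) := by
    rw [hscale, one_div_lcm_eq_gcd_div_mul]
    ring
  have hb_inv : (b : ℝ)⁻¹ ≤ 1 := inv_le_one_of_one_le₀ (by exact_mod_cast hb)
  refine ⟨hne, ?_, heq, ?_⟩
  · rw [hscale]
    exact (mul_le_of_le_one_left (by positivity) hb_inv).trans hsep
  · rw [← heq, hscale, norm_smul, norm_inv, Real.norm_natCast]
    gcongr
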